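/- Let q > 1, a > 0, and c > 1 be real numbers with c < q^{1/2}. Then for every integer n > a and every integer t with 1 ≤ t < a and every real r of the form r = r₂ · r₁^{(n-e)/t} with 0 ≤ e < t, r₂ < c, and r₁ ≤ q^t - 1, provided additionally (q^t/(q^t-1))^{s/t} > c for all 1 ≤ t < a where s is chosen with n > s, one has r < q^n. -/

import Mathlib

open Real

lemma div_rpow_mul_rpow_sub {Q D : ℝ} (hQ : 0 ≤ Q) (hD : 0 < D) (y z : ℝ) :
    (Q / D) ^ y * D ^ (y - z) = Q ^ y / D ^ z := by
  rw [div_rpow hQ hD.le, rpow_sub hD]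
  field_simp

lemma rpow_rpow_div_self {q t : ℝ} (hq : 0 ≤ q) (ht : t ≠ 0) (n : ℝ) :
    (q ^ t) ^ (n / t) = q ^ n := by
  rw [← rpow_mul hq, mul_div_cancel₀ n ht]

/-- Writing `D = q^t - 1 ≥ 1`, the bound on `c` turns `c · D^{(n-e)/t}` into at most
`(q^t/D)^{n/t} · D^{(n-e)/t} = q^n / D^{e/t} ≤ q^n`. -/
lemma mul_rpow_lt_rpow_of_lt_rpow_div {q c s t n e r₁ r₂ : ℝ} (hq : 0 ≤ q) (ht : 0 < t)
    (he : 0 ≤ e) (hen : e ≤ n) (hsn : s ≤ n) (hD : 1 ≤ q ^ t - 1)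
    (hc : c < (q ^ t / (q ^ t - 1)) ^ (s / t)) (hr₁0 : 0 ≤ r₁) (hr₁ : r₁ ≤ q ^ t - 1)
    (hr₂0 : 0 ≤ r₂) (hr₂ : r₂ < c) :
    r₂ * r₁ ^ ((n - e) / t) < q ^ n := by
  set D := q ^ t - 1
  have hD0 : 0 < D := one_pos.trans_le hD
  have hQD : 1 ≤ q ^ t / D := (one_le_div hD0).2 (by simp [D])
  have hx : 0 ≤ (n - e) / t := div_nonneg (sub_nonneg.2 hen) ht.le
  calc r₂ * r₁ ^ ((n - e) / t) ≤ r₂ * D ^ ((n - e) / t) := by gcongr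
    _ < c * D ^ ((n - e) / t) := by gcongr
    _ < (q ^ t / D) ^ (s / t) * D ^ ((n - e) / t) := by gcongr
    _ ≤ (q ^ t / D) ^ (n / t) * D ^ ((n - e) / t) := by gcongr
    _ = (q ^ t) ^ (n / t) / D ^ (e / t) := by
      rw [sub_div, div_rpow_mul_rpow_sub (rpow_nonneg hq t) hD0]
    _ ≤ (q ^ t) ^ (n / t) := div_le_self (by positivity) (one_le_rpow hD (by positivity))
    _ = q ^ n := rpow_rpow_div_self hq ht.ne' n

theorem stmt_6_general (q a c s : ℝ) (hq : 1 < q)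
    (hcq : c < q ^ ((1 : ℝ) / 2))
    (hs : ∀ t : ℤ, 1 ≤ t → (t : ℝ) < a →
      c < (q ^ (t : ℝ) / (q ^ (t : ℝ) - 1)) ^ (s / (t : ℝ)))
    (n t e : ℤ) (hna : a < (n : ℝ)) (hns : s < (n : ℝ))
    (ht1 : 1 ≤ t) (hta : (t : ℝ) < a) (he0 : 0 ≤ e) (het : e < t)
    (r r₁ r₂ : ℝ) (hr₁0 : 0 ≤ r₁) (hr₂0 : 0 ≤ r₂)
    (hr₂ : r₂ < c) (hr₁ : r₁ ≤ q ^ (t : ℝ) - 1)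
    (hr : r = r₂ * r₁ ^ (((n : ℝ) - (e : ℝ)) / (t : ℝ))) :
    r < q ^ (n : ℝ) := by
  have ht : (1 : ℝ) ≤ t := by exact_mod_cast ht1
  have he : (0 : ℝ) ≤ e := by exact_mod_cast he0
  have hen : (e : ℝ) ≤ n := by linarith [show (e : ℝ) < t by exact_mod_cast het]
  subst hr
  rcases le_total (q ^ (t : ℝ) - 1) 1 with hD | hD
  · calc r₂ * r₁ ^ (((n : ℝ) - e) / t) ≤ r₂ :=
          mul_le_of_le_one_right hr₂0
            (rpow_le_one hr₁0 (hr₁.trans hD) (div_nonneg (by linarith) (by linarith)))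
      _ < q ^ ((1 : ℝ) / 2) := hr₂.trans hcq
      _ ≤ q ^ (n : ℝ) := rpow_le_rpow_of_exponent_le hq.le (by linarith)
  · exact mul_rpow_lt_rpow_of_lt_rpow_div (by linarith) (by linarith) he hen hns.le hD
      (hs t ht1 hta) hr₁0 hr₁ hr₂0 hr₂

/-- the numerical estimate underlying the coefficient bound for
ramification divisors of polarized endomorphisms (Theorem 3.1).  With `q > 1`,
`a > 0`, `1 < c < q^{1/2}`, `s` such that `(q^t/(q^t-1))^{s/t} > c` for all
integers `1 ≤ t < a`, and an integer `n > max(a, s)`: any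
`r = r₂ · r₁^{(n-e)/t}` with integers `1 ≤ t < a`, `0 ≤ e < t`, and reals
`0 ≤ r₂ < c`, `0 ≤ r₁ ≤ q^t - 1` satisfies `r < q^n`. -/
theorem stmt_6 (q a c s : ℝ) (hq : 1 < q) (ha : 0 < a) (hc : 1 < c)
    (hcq : c < q ^ ((1 : ℝ) / 2))
    (hs : ∀ t : ℤ, 1 ≤ t → (t : ℝ) < a →
      c < (q ^ (t : ℝ) / (q ^ (t : ℝ) - 1)) ^ (s / (t : ℝ)))
    (n t e : ℤ) (hna : a < (n : ℝ)) (hns : s < (n : ℝ))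
    (ht1 : 1 ≤ t) (hta : (t : ℝ) < a) (he0 : 0 ≤ e) (het : e < t)
    (r r₁ r₂ : ℝ) (hr₁0 : 0 ≤ r₁) (hr₂0 : 0 ≤ r₂)
    (hr₂ : r₂ < c) (hr₁ : r₁ ≤ q ^ (t : ℝ) - 1)
    (hr : r = r₂ * r₁ ^ (((n : ℝ) - (e : ℝ)) / (t : ℝ))) :
    r < q ^ (n : ℝ) :=
  stmt_6_general q a c s hq hcq hs n t e hna hns ht1 hta he0 het r r₁ r₂ hr₁0 hr₂0 hr₂ hr₁ hr
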